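/- Assume kG is finite dimensional and semisimple and |q| = |χ| = s. If M is a finite dimensional indecomposable H-module with (x^s − β)M = 0 for some β ∈ k^×, then M is simple and M ≅ V(i,β) for some i ∈ I. -/

import Mathlib

open scoped TensorProduct

namespace HopfOrePaper

/-- A representation of `G` on `V` is simple (irreducible): `V ≠ 0` and the only
`G`-stable subspaces are `0` and `V`. -/
def IsSimpleRep {k G V : Type} [Field k] [Group G] [AddCommGroup V] [Module k V]
    (ρ : Representation k G V) : Prop :=
  Nontrivial V ∧ ∀ p : Submodule k V, (∀ g : G, ∀ v ∈ p, ρ g v ∈ p) → p = ⊥ ∨ p = ⊤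

/-- Isomorphism of representations. -/
def RepIso {k G V V' : Type} [Field k] [Group G] [AddCommGroup V] [Module k V]
    [AddCommGroup V'] [Module k V'] (ρ : Representation k G V)
    (ρ' : Representation k G V') : Prop :=
  ∃ f : V ≃ₗ[k] V', ∀ (g : G) (v : V), f (ρ g v) = ρ' g (f v)

/-- `IsTwistIso χ t ρ ρ'` says that `ρ' ≅ V_{χ^t} ⊗ ρ` as representations of `G`. -/
def IsTwistIso {k G V V' : Type} [Field k] [Group G] [AddCommGroup V] [Module k V]
    [AddCommGroup V'] [Module k V'] (χ : G →* kˣ) (t : ℤ)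
    (ρ : Representation k G V) (ρ' : Representation k G V') : Prop :=
  ∃ f : V ≃ₗ[k] V', ∀ (g : G) (v : V), ρ' g (f v) = ((χ g ^ t : kˣ) : k) • f (ρ g v)

/-- `ρ` and `ρ'` lie in the same class of the equivalence `∼` on simple modules,
i.e. `ρ' ≅ V_{χ^t} ⊗ ρ` for some `t ∈ ℤ` (i.e. `[i] = [j]`). -/
def TwistEquiv {k G V V' : Type} [Field k] [Group G] [AddCommGroup V] [Module k V]
    [AddCommGroup V'] [Module k V'] (χ : G →* kˣ)
    (ρ : Representation k G V) (ρ' : Representation k G V') : Prop :=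
  ∃ t : ℤ, IsTwistIso χ t ρ ρ'

/-- A presentation of the Hopf–Ore extension `H = kG(χ⁻¹, a, 0)`:
`H` is a `k`-algebra containing the group algebra `kG` and an element `x` with
`x·g = χ⁻¹(g)·g·x`, and with `k`-basis `{g xⁱ | g ∈ G, i ∈ ℕ}`. -/
structure HopfOre (k G H : Type) [Field k] [Group G] [Ring H] [Algebra k H]
    (χ : G →* kˣ) : Type where
  emb : MonoidAlgebra k G →ₐ[k] H
  x : H
  comm_rel : ∀ g : G, x * emb (MonoidAlgebra.of k G g)
      = (((χ g)⁻¹ : kˣ) : k) • (emb (MonoidAlgebra.of k G g) * x)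
  basis_li : LinearIndependent k fun p : G × ℕ => emb (MonoidAlgebra.of k G p.1) * x ^ p.2
  basis_span :
    Submodule.span k (Set.range fun p : G × ℕ => emb (MonoidAlgebra.of k G p.1) * x ^ p.2) = ⊤

variable {k G H : Type} [Field k] [Group G] [Ring H] [Algebra k H] {χ : G →* kˣ}

/-- `IsStdQuot HO ρ e c d` says that the `H`-module `W` is (a copy of) the quotient module
`M(V)/cM(V)` of `M(V) = H ⊗_{kG} V`, where `c` is a (central) polynomial in `x` of degree `d`
(of the form `x^t` or `(x^s - β)^r`): `e` is a `kG`-equivariant embedding of `V` into `W`,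
`c` annihilates `W`, and `W = ⊕_{j=0}^{d-1} xʲ·e(V)`. -/
structure IsStdQuot (HO : HopfOre k G H χ) {V W : Type}
    [AddCommGroup V] [Module k V]
    [AddCommGroup W] [Module k W] [Module H W] [IsScalarTower k H W]
    (ρ : Representation k G V) (e : V →ₗ[k] W) (c : H) (d : ℕ) : Prop where
  equivariant : ∀ (g : G) (v : V), e (ρ g v) = HO.emb (MonoidAlgebra.of k G g) • e v
  ann : ∀ w : W, c • w = 0
  xbasis : Function.Bijective fun f : Fin d → V => ∑ j : Fin d, HO.x ^ (j : ℕ) • e (f j)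

/-- A witness exhibiting the `H`-module `W` as a standard quotient module
`M(V_i)/cM(V_i)` for some finite-dimensional simple `kG`-module `V_i`. -/
structure StdWitness (HO : HopfOre k G H χ) (W : Type)
    [AddCommGroup W] [Module k W] [Module H W] [IsScalarTower k H W]
    (c : H) (d : ℕ) : Type 1 where
  V : Type
  [acg : AddCommGroup V]
  [modk : Module k V]
  ρ : Representation k G V
  fin : FiniteDimensional k V
  simple : IsSimpleRep ρ
  e : V →ₗ[k] W
  std : IsStdQuot HO ρ e c d

/-- The representation of `G` obtained from an `H`-module by restriction along
`kG → H`. -/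
noncomputable def resRep (HO : HopfOre k G H χ) (M : Type) [AddCommGroup M] [Module k M]
    [Module H M] [IsScalarTower k H M] : Representation k G M where
  toFun g :=
    { toFun := fun m => HO.emb (MonoidAlgebra.of k G g) • m
      map_add' := fun m n => smul_add _ m n
      map_smul' := fun c m => by
        simp only [RingHom.id_apply]
        exact (smul_comm c (HO.emb (MonoidAlgebra.of k G g)) m).symm }
  map_one' := by
    ext m
    simp only [LinearMap.coe_mk, AddHom.coe_mk, LinearMap.id_coe, id_eq, Module.End.one_apply]
    rw [map_one, map_one, one_smul]
  map_mul' g h := by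
    ext m
    simp only [LinearMap.coe_mk, AddHom.coe_mk, Module.End.mul_apply]
    rw [map_mul, map_mul, mul_smul]

/-- A module over a ring is indecomposable. -/
def IsIndecomposableMod (R M : Type) [Ring R] [AddCommGroup M] [Module R M] : Prop :=
  Nontrivial M ∧ ∀ p q : Submodule R M, IsCompl p q → p = ⊥ ∨ q = ⊥

/-- A module is uniserial if its submodules form a chain. -/
def IsUniserial (R M : Type) [Ring R] [AddCommGroup M] [Module R M] : Prop :=
  ∀ p q : Submodule R M, p ≤ q ∨ q ≤ p

/-- The radical of a module: the intersection of its maximal submodules. -/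
def modRadical (R M : Type) [Ring R] [AddCommGroup M] [Module R M] : Submodule R M :=
  sInf {p : Submodule R M | IsCoatom p}

/-- The socle of a module: the sum of its simple submodules. -/
def modSocle (R M : Type) [Ring R] [AddCommGroup M] [Module R M] : Submodule R M :=
  sSup {p : Submodule R M | IsAtom p}

/-- The radical series `M ⊇ rad M ⊇ rad² M ⊇ ⋯` of a module. -/
noncomputable def radIter (R M : Type) [Ring R] [AddCommGroup M] [Module R M] :
    ℕ → Submodule R M
  | 0 => ⊤
  | j + 1 => Submodule.map (radIter R M j).subtype (modRadical R (radIter R M j))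

/-- The submodule `c•M` of a module `M` (for `c` a central, or normalizing, element). -/
def smulRange {M : Type} (R : Type) [Ring R] [AddCommGroup M] [Module R M] (c : R) :
    Submodule R M :=
  Submodule.span R (Set.range fun m : M => c • m)

/-- The subquotient `q/p` associated with submodules `p ≤ q`. -/
abbrev sectionQuot {R M : Type} [Ring R] [AddCommGroup M] [Module R M]
    (p q : Submodule R M) :=
  ↥q ⧸ (Submodule.comap q.subtype p)

/-- The hypothesis that a given `H`-module structure on `M ⊗[k] N` is the one obtained
from the `H`-module structures of `M` and `N` via the comultiplication of
`H = kG(χ⁻¹,a,0)`, i.e. `Δ(g) = g ⊗ g` and `Δ(x) = x ⊗ a + 1 ⊗ x`. -/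
structure TensorAct (HO : HopfOre k G H χ) (a : G) (M N : Type)
    [AddCommGroup M] [Module k M] [Module H M] [IsScalarTower k H M]
    [AddCommGroup N] [Module k N] [Module H N] [IsScalarTower k H N]
    [Module H (M ⊗[k] N)] [IsScalarTower k H (M ⊗[k] N)] : Prop where
  g_tmul : ∀ (g : G) (m : M) (n : N),
    HO.emb (MonoidAlgebra.of k G g) • (m ⊗ₜ[k] n)
      = (HO.emb (MonoidAlgebra.of k G g) • m) ⊗ₜ[k] (HO.emb (MonoidAlgebra.of k G g) • n)
  x_tmul : ∀ (m : M) (n : N),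
    HO.x • (m ⊗ₜ[k] n)
      = (HO.x • m) ⊗ₜ[k] (HO.emb (MonoidAlgebra.of k G a) • n) + m ⊗ₜ[k] (HO.x • n)

/-- The twist of a representation by the `t`-th power of a character: this is the
representation `V_{χ^t} ⊗ ρ`, realized on the same space (`σ^t` applied to `ρ`). -/
def twistRep {k G V : Type} [Field k] [Group G] [AddCommGroup V] [Module k V]
    (χ : G →* kˣ) (t : ℤ) (ρ : Representation k G V) : Representation k G V where
  toFun g := ((χ g ^ t : kˣ) : k) • ρ g
  map_one' := by simp
  map_mul' g h := by
    ext v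
    simp only [map_mul, mul_zpow, Units.val_mul, LinearMap.smul_apply, Module.End.mul_apply,
      map_smul, smul_smul, mul_comm]

/-- The one-dimensional representation attached to a linear character. -/
def charRep (k : Type) {G : Type} [Field k] [Group G] (μ : G →* kˣ) :
    Representation k G k where
  toFun g := ((μ g : k) • LinearMap.id)
  map_one' := by
    simp only [map_one, Units.val_one, one_smul]
    rfl
  map_mul' g h := by
    ext
    simp [mul_smul, mul_comm]

/-- `SubRepIso ρT p ρ` : `p` is a `G`-stable subspace of the representation `ρT`
and, as a representation of `G`, it is isomorphic to `ρ`. -/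
def SubRepIso {k G X V : Type} [Field k] [Group G] [AddCommGroup X] [Module k X]
    [AddCommGroup V] [Module k V]
    (ρT : Representation k G X) (p : Submodule k X) (ρ : Representation k G V) : Prop :=
  (∀ g : G, ∀ y ∈ p, ρT g y ∈ p) ∧
  ∃ f : V ≃ₗ[k] ↥p, ∀ (g : G) (v : V), (f (ρ g v) : X) = ρT g (f v)

end HopfOrePaper

/-!
Since `x^s` acts on `M` as the nonzero scalar `β`, `x` acts invertibly. Averaging a `kG`-linear
projection `π` onto an `H`-submodule over the conjugates `xʲ π x⁻ʲ`, `j < s`, gives a projection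
commuting with `x`, and still with every `g ∈ G` because `x⁻¹ g x = χ(g) g` is a scalar multiple of
`g`. (The average makes sense since `s` is invertible in `k`, which contains the primitive `s`-th
root of unity `q`.) This projection is `H`-linear, so `M` is semisimple and, being indecomposable,
simple.
The central element `a` acts on a simple `kG`-submodule `V ⊆ M` by a scalar `μ ≠ 0`, hence on
`xʲV` by `qʲμ`. As `q` has order `s`, the spaces `xʲV`, `j < s`, lie in distinct eigenspaces of
`a`, so their sum is direct; it is a nonzero `H`-submodule, hence all of `M`.
-/

section ConjAvg

variable {k A : Type*} [Field k] [Ring A] [Algebra k A]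

variable (k) in
def conjAvg (T : Aˣ) (s : ℕ) (π : A) : A :=
  (s : k)⁻¹ • ∑ j ∈ Finset.range s, ↑(T ^ j) * π * ↑(T ^ j)⁻¹

theorem commute_conjAvg_of_commute_pow {T : Aˣ} {s : ℕ} {π : A} (h : Commute (↑(T ^ s) : A) π) :
    Commute (T : A) (conjAvg k T s π) := by
  set c : ℕ → A := fun j => ↑(T ^ j) * π * ↑(T ^ j)⁻¹
  have hshift : ∀ j, ↑T * c j = c (j + 1) * ↑T := fun j => by
    simp only [c, pow_succ', mul_inv_rev, Units.val_mul, mul_assoc, Units.inv_mul, mul_one]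
  have hcs : c s = c 0 := by
    simp only [c, pow_zero, inv_one, Units.val_one, one_mul, mul_one]
    rw [h.eq, mul_assoc, Units.mul_inv, mul_one]
  have hsum : ∑ j ∈ Finset.range s, c (j + 1) = ∑ j ∈ Finset.range s, c j :=
    add_right_cancel (b := c 0) <| by
      rw [← Finset.sum_range_succ', Finset.sum_range_succ, hcs]
  change ↑T * ((s : k)⁻¹ • ∑ j ∈ Finset.range s, c j) = ((s : k)⁻¹ • ∑ j ∈ Finset.range s, c j) * ↑T
  rw [mul_smul_comm, smul_mul_assoc, Finset.mul_sum, Finset.sum_mul]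
  simp_rw [hshift]
  rw [← Finset.sum_mul, hsum, Finset.sum_mul]

theorem commute_conjAvg_of_conj_eq_smul {T : Aˣ} {s : ℕ} {π B : A} {c : k}
    (hB : ↑T⁻¹ * B * ↑T = c • B) (hπ : Commute B π) :
    Commute B (conjAvg k T s π) := by
  have hpow : ∀ j : ℕ, ↑(T ^ j)⁻¹ * B * ↑(T ^ j) = c ^ j • B := by
    intro j
    induction j with
    | zero => simp
    | succ j ih =>
      calc ↑(T ^ (j + 1))⁻¹ * B * ↑(T ^ (j + 1)) = ↑T⁻¹ * (↑(T ^ j)⁻¹ * B * ↑(T ^ j)) * ↑T := by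
            simp only [pow_succ, mul_inv_rev, Units.val_mul, mul_assoc]
        _ = c ^ (j + 1) • B := by
            rw [ih, mul_smul_comm, smul_mul_assoc, hB, smul_smul, pow_succ]
  refine Commute.smul_right (Commute.sum_right _ _ _ fun j _ => ?_) _
  set u := T ^ j
  have hconj : Commute π (↑u⁻¹ * B * ↑u) := by rw [hpow]; exact (hπ.smul_left _).symm
  calc B * (↑u * π * ↑u⁻¹) = ↑u * (↑u⁻¹ * B * ↑u) * π * ↑u⁻¹ := by
        simp only [mul_assoc, Units.mul_inv_cancel_left]
    _ = ↑u * π * (↑u⁻¹ * B * ↑u) * ↑u⁻¹ := by rw [mul_assoc (u : A) _ π, ← hconj.eq, ← mul_assoc]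
    _ = ↑u * π * ↑u⁻¹ * B := by simp only [mul_assoc, Units.mul_inv, mul_one]

theorem LinearMap.IsProj.conjAvg {M : Type*} [AddCommGroup M] [Module k M] {P : Submodule k M}
    {π : Module.End k M} (hπ : LinearMap.IsProj P π) {T : (Module.End k M)ˣ} {s : ℕ}
    (hs : (s : k) ≠ 0) (hT : Set.MapsTo (T : Module.End k M) P P)
    (hT' : Set.MapsTo (↑T⁻¹ : Module.End k M) P P) :
    LinearMap.IsProj P (conjAvg k T s π) := by
  have hpow : ∀ j : ℕ, Set.MapsTo (↑(T ^ j) : Module.End k M) P P ∧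
      Set.MapsTo (↑(T ^ j)⁻¹ : Module.End k M) P P := fun j => by
    rw [← inv_pow, Units.val_pow_eq_pow_val, Units.val_pow_eq_pow_val, Module.End.coe_pow,
      Module.End.coe_pow]
    exact ⟨hT.iterate j, hT'.iterate j⟩
  refine ⟨fun m => ?_, fun m hm => ?_⟩
  · refine P.smul_mem _ ?_
    rw [LinearMap.sum_apply]
    exact P.sum_mem fun j _ => (hpow j).1 (hπ.map_mem _)
  · have hterm : ∀ j ∈ Finset.range s, (↑(T ^ j) * π * ↑(T ^ j)⁻¹ : Module.End k M) m = m :=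
      fun j _ => by
        rw [Module.End.mul_apply, Module.End.mul_apply, hπ.map_id _ ((hpow j).2 hm),
          ← Module.End.mul_apply, Units.mul_inv, Module.End.one_apply]
    rw [_root_.conjAvg, LinearMap.smul_apply, LinearMap.sum_apply, Finset.sum_congr rfl hterm,
      Finset.sum_const, Finset.card_range, ← Nat.cast_smul_eq_nsmul k, smul_smul,
      inv_mul_cancel₀ hs, one_smul]

end ConjAvg

def Units.ofPowEqAlgebraMap {k A : Type*} [Field k] [Ring A] [Algebra k A] (a : A) {s : ℕ} {β : k}
    (hs : s ≠ 0) (hβ : β ≠ 0) (h : a ^ s = algebraMap k A β) : Aˣ where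
  val := a
  inv := β⁻¹ • a ^ (s - 1)
  val_inv := by
    rw [mul_smul_comm, ← pow_succ', Nat.sub_add_cancel (Nat.pos_of_ne_zero hs), h,
      Algebra.smul_def, ← map_mul, inv_mul_cancel₀ hβ, map_one]
  inv_val := by
    rw [smul_mul_assoc, ← pow_succ, Nat.sub_add_cancel (Nat.pos_of_ne_zero hs), h,
      Algebra.smul_def, ← map_mul, inv_mul_cancel₀ hβ, map_one]

theorem exists_isProj_commute_of_isSemisimpleRing {k A M : Type*} [Field k] [Ring A] [Algebra k A]
    [IsSemisimpleRing A] [AddCommGroup M] [Module k M] (φ : A →ₐ[k] Module.End k M)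
    {P : Submodule k M} (hP : ∀ a, Set.MapsTo (φ a) P P) :
    ∃ π : Module.End k M, LinearMap.IsProj P π ∧ ∀ a, Commute (φ a) π := by
  let _ : Module A M := Module.compHom M φ.toRingHom
  have : IsScalarTower k A M := ⟨fun c a m => by
    change φ (c • a) m = c • φ a m
    rw [map_smul, LinearMap.smul_apply]⟩
  let P' : Submodule A M := { P with smul_mem' := fun a _ hm => hP a hm }
  obtain ⟨Q, hQ⟩ := exists_isCompl P'
  refine ⟨(P'.projection Q hQ).restrictScalars k,
    ⟨P'.projection_apply_mem hQ, fun _ hm => P'.projection_apply_of_mem_left hQ hm⟩,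
    fun a => LinearMap.ext fun m => ((P'.projection Q hQ).map_smul a m).symm⟩

namespace HopfOrePaper

theorem IsIndecomposableMod.isSimpleModule {R M : Type} [Ring R] [AddCommGroup M] [Module R M]
    [ComplementedLattice (Submodule R M)] (h : IsIndecomposableMod R M) : IsSimpleModule R M := by
  have := h.1
  refine { toIsSimpleOrder := ⟨fun P => ?_⟩ }
  obtain ⟨Q, hPQ⟩ := exists_isCompl P
  exact (h.2 P Q hPQ).imp_right fun hQ => by simpa [hQ] using hPQ.sup_eq_top

section Representation

variable {k G M : Type} [Field k] [Group G] [AddCommGroup M] [Module k M]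
  {ρ : Representation k G M}

theorem exists_isAtom_subrepresentation [FiniteDimensional k M] [Nontrivial M]
    (ρ : Representation k G M) : ∃ V : Subrepresentation ρ, IsAtom V := by
  have : WellFoundedLT (Subrepresentation ρ) :=
    (show StrictMono (Subrepresentation.toSubmodule (ρ := ρ)) from fun _ _ h => h).wellFoundedLT
  have := isAtomic_of_orderBot_wellFounded_lt (α := Subrepresentation ρ) wellFounded_lt
  obtain h | ⟨V, hV, -⟩ := eq_bot_or_exists_atom_le (⊤ : Subrepresentation ρ)
  · exact absurd (congrArg Subrepresentation.toSubmodule h) top_ne_bot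
  · exact ⟨V, hV⟩

theorem isSimpleRep_toRepresentation_of_isAtom {V : Subrepresentation ρ} (hV : IsAtom V) :
    IsSimpleRep V.toRepresentation := by
  refine ⟨Submodule.nontrivial_iff_ne_bot.mpr fun h => hV.1 ?_, fun p hp => ?_⟩
  · exact Subrepresentation.toSubmodule_injective h
  let W : Subrepresentation ρ := ⟨p.map V.toSubmodule.subtype, by
    rintro g _ ⟨v, hv, rfl⟩
    exact ⟨_, hp g v hv, rfl⟩⟩
  have hinj := Submodule.map_injective_of_injective V.toSubmodule.injective_subtype
  have hWV : W ≤ V := by rintro _ ⟨v, _, rfl⟩; exact v.2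
  refine (hV.le_iff.mp hWV).imp (fun h => ?_) fun h => ?_
  · exact hinj ((congrArg Subrepresentation.toSubmodule h).trans (Submodule.map_bot _).symm)
  · exact hinj ((congrArg Subrepresentation.toSubmodule h).trans (Submodule.map_subtype_top _).symm)

theorem IsSimpleRep.exists_apply_eq_smul_of_mem_center [IsAlgClosed k] [FiniteDimensional k M]
    (hρ : IsSimpleRep ρ) {a : G} (ha : a ∈ Subgroup.center G) : ∃ μ : k, ∀ v, ρ a v = μ • v := by
  have := hρ.1
  obtain ⟨μ, hμ⟩ := Module.End.exists_eigenvalue (ρ a)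
  have hstable : ∀ g, ∀ v ∈ Module.End.eigenspace (ρ a) μ,
      ρ g v ∈ Module.End.eigenspace (ρ a) μ := by
    intro g v hv
    rw [Module.End.mem_eigenspace_iff] at hv ⊢
    rw [← Module.End.mul_apply, ← map_mul, ← Subgroup.mem_center_iff.mp ha g, map_mul,
      Module.End.mul_apply, hv, map_smul]
  refine ⟨μ, fun v => ?_⟩
  rcases hρ.2 _ hstable with h | h
  · exact absurd h (Module.End.hasEigenvalue_iff.mp hμ)
  · exact Module.End.mem_eigenspace_iff.mp (h ▸ Submodule.mem_top)

end Representation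

namespace HopfOre

variable {k G H : Type} [Field k] [Group G] [Ring H] [Algebra k H] {χ : G →* kˣ}
  (HO : HopfOre k G H χ)

def generators : Set H :=
  insert HO.x (Set.range fun g => HO.emb (MonoidAlgebra.of k G g))

theorem adjoin_generators : Algebra.adjoin k HO.generators = ⊤ := by
  refine eq_top_iff.mpr fun h _ => ?_
  have hspan : h ∈ Submodule.span k
      (Set.range fun p : G × ℕ => HO.emb (MonoidAlgebra.of k G p.1) * HO.x ^ p.2) := by
    rw [HO.basis_span]; exact Submodule.mem_top
  refine (Submodule.span_le (p := Subalgebra.toSubmodule (Algebra.adjoin k HO.generators))).mpr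
    ?_ hspan
  rintro _ ⟨⟨g, i⟩, rfl⟩
  exact Subalgebra.mul_mem _ (Algebra.subset_adjoin (Set.mem_insert_of_mem _ ⟨g, rfl⟩))
    (Subalgebra.pow_mem _ (Algebra.subset_adjoin (Set.mem_insert _ _)) _)

theorem emb_of_mul_x (g : G) :
    HO.emb (MonoidAlgebra.of k G g) * HO.x
      = (χ g : k) • (HO.x * HO.emb (MonoidAlgebra.of k G g)) := by
  rw [HO.comm_rel, smul_smul, ← Units.val_mul, mul_inv_cancel, Units.val_one, one_smul]

theorem emb_of_mul_x_pow (g : G) (n : ℕ) :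
    HO.emb (MonoidAlgebra.of k G g) * HO.x ^ n
      = ((χ g : k) ^ n) • (HO.x ^ n * HO.emb (MonoidAlgebra.of k G g)) := by
  induction n with
  | zero => simp
  | succ n ih =>
    rw [pow_succ, ← mul_assoc, ih, smul_mul_assoc, mul_assoc, emb_of_mul_x, mul_smul_comm,
      smul_smul, ← mul_assoc, ← pow_succ, ← pow_succ]

variable {M : Type} [AddCommGroup M] [Module k M] [Module H M] [IsScalarTower k H M]

theorem mapsTo_smul {N : Submodule k M} (hx : Set.MapsTo (HO.x • ·) (N : Set M) N)
    (hg : ∀ g, Set.MapsTo (HO.emb (MonoidAlgebra.of k G g) • ·) (N : Set M) N) (h : H) :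
    Set.MapsTo (h • ·) (N : Set M) N := by
  have hh : h ∈ Algebra.adjoin k HO.generators := HO.adjoin_generators ▸ Algebra.mem_top
  induction hh using Algebra.adjoin_induction with
  | mem y hy =>
    rcases hy with rfl | ⟨g, rfl⟩
    exacts [hx, hg g]
  | algebraMap c =>
    intro m hm
    simpa only [SetLike.mem_coe, algebraMap_smul] using N.smul_mem c hm
  | add y z _ _ hy hz =>
    intro m hm
    simpa only [SetLike.mem_coe, add_smul] using N.add_mem (hy hm) (hz hm)
  | mul y z _ _ hy hz =>
    intro m hm
    simpa only [SetLike.mem_coe, mul_smul] using hy (hz hm)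

theorem commute_lsmul {f : Module.End k M} (hx : Commute (Algebra.lsmul k k M HO.x) f)
    (hg : ∀ g, Commute (Algebra.lsmul k k M (HO.emb (MonoidAlgebra.of k G g))) f) (h : H) :
    Commute (Algebra.lsmul k k M h) f := by
  have hle : Algebra.adjoin k HO.generators ≤
      (Subalgebra.centralizer k {f}).comap (Algebra.lsmul k k M) :=
    Algebra.adjoin_le <| by
      rintro _ (rfl | ⟨g, rfl⟩) <;>
        simp only [SetLike.mem_coe, Subalgebra.mem_comap, Subalgebra.mem_centralizer_iff,
          Set.mem_singleton_iff, forall_eq]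
      exacts [hx.eq.symm, (hg g).eq.symm]
  have := hle (HO.adjoin_generators ▸ Algebra.mem_top (x := h))
  simp only [Subalgebra.mem_comap, Subalgebra.mem_centralizer_iff, Set.mem_singleton_iff,
    forall_eq] at this
  exact this.symm

theorem x_pow_smul_eq_of_ann {s : ℕ} {β : k}
    (hann : ∀ m : M, (HO.x ^ s - algebraMap k H β) • m = 0) (m : M) :
    HO.x ^ s • m = β • m := by
  rw [← sub_eq_zero, ← algebraMap_smul H β m, ← sub_smul]
  exact hann m

theorem x_pow_mul_smul {s : ℕ} {β : k} (hxs : ∀ m : M, HO.x ^ s • m = β • m) (n : ℕ) (m : M) :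
    HO.x ^ (s * n) • m = β ^ n • m := by
  induction n with
  | zero => simp
  | succ n ih => rw [mul_add_one, pow_add, mul_smul, hxs, smul_comm, ih, smul_smul, pow_succ']

theorem lsmul_x_pow {s : ℕ} {β : k} (hxs : ∀ m : M, HO.x ^ s • m = β • m) :
    Algebra.lsmul k k M HO.x ^ s = algebraMap k _ β := by
  ext m; rw [← map_pow, Algebra.lsmul_apply, hxs, Module.algebraMap_end_apply]

theorem x_smul_injective {s : ℕ} {β : k} (hs : s ≠ 0) (hβ : β ≠ 0)
    (hxs : ∀ m : M, HO.x ^ s • m = β • m) : Function.Injective (HO.x • · : M → M) :=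
  ((Module.End.isUnit_iff _).mp (Units.ofPowEqAlgebraMap _ hs hβ (HO.lsmul_x_pow hxs)).isUnit).1

theorem complementedLattice_submodule [IsSemisimpleRing (MonoidAlgebra k G)] {s : ℕ} {β : k}
    (hs : (s : k) ≠ 0) (hβ : β ≠ 0) (hxs : ∀ m : M, HO.x ^ s • m = β • m) :
    ComplementedLattice (Submodule H M) := by
  have hs0 : s ≠ 0 := by rintro rfl; exact hs Nat.cast_zero
  set X := Algebra.lsmul k k M HO.x
  have hXs : X ^ s = algebraMap k _ β := HO.lsmul_x_pow hxs
  set T := Units.ofPowEqAlgebraMap X hs0 hβ hXs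
  refine ⟨fun P => ?_⟩
  obtain ⟨π, hπ, hπG⟩ := exists_isProj_commute_of_isSemisimpleRing
    ((Algebra.lsmul k k M).comp HO.emb) (P := P.restrictScalars k)
    fun z _ hm => P.smul_mem (HO.emb z) hm
  set π' := conjAvg k T s π
  have hproj : LinearMap.IsProj (P.restrictScalars k) π' :=
    hπ.conjAvg hs (fun _ hm => P.smul_mem HO.x hm) fun m hm => by
      change β⁻¹ • (X ^ (s - 1)) m ∈ P
      rw [← map_pow]
      exact P.smul_of_tower_mem β⁻¹ (P.smul_mem _ hm)
  have hX : Commute X π' := commute_conjAvg_of_commute_pow (T := T) <| by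
    rw [Units.val_pow_eq_pow_val]
    exact hXs ▸ Algebra.commute_algebraMap_left β π
  have hG : ∀ g, Commute (Algebra.lsmul k k M (HO.emb (MonoidAlgebra.of k G g))) π' :=
    fun g => commute_conjAvg_of_conj_eq_smul (c := (χ g : k)) (by
      rw [mul_assoc, show (T : Module.End k M) = X from rfl, ← map_mul, HO.emb_of_mul_x,
        map_smul, map_mul, mul_smul_comm, ← mul_assoc,
        show Algebra.lsmul k k M HO.x = T from rfl, Units.inv_mul, one_mul]) (hπG _)
  let πH : M →ₗ[H] M :=
    { toFun := π'
      map_add' := map_add π'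
      map_smul' := fun h m => (LinearMap.congr_fun (HO.commute_lsmul hX hG h).eq m).symm }
  exact ⟨LinearMap.ker πH, LinearMap.IsProj.isCompl (f := πH) ⟨hproj.map_mem, hproj.map_id⟩⟩

variable {V : Type} [AddCommGroup V] [Module k V]

def xSum (e : V →ₗ[k] M) (d : ℕ) : (Fin d → V) →ₗ[k] M :=
  ∑ j : Fin d, Algebra.lsmul k k M (HO.x ^ (j : ℕ)) ∘ₗ e ∘ₗ LinearMap.proj j

theorem xSum_apply (e : V →ₗ[k] M) (d : ℕ) (f : Fin d → V) :
    HO.xSum e d f = ∑ j : Fin d, HO.x ^ (j : ℕ) • e (f j) := by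
  simp only [xSum, LinearMap.sum_apply, LinearMap.comp_apply,
    LinearMap.proj_apply, Algebra.lsmul_apply]

theorem xSum_single (e : V →ₗ[k] M) {d : ℕ} (j : Fin d) (v : V) :
    HO.xSum e d (Pi.single j v) = HO.x ^ (j : ℕ) • e v := by
  rw [xSum_apply, Finset.sum_eq_single j (fun i _ hij => by simp [hij]) (by simp),
    Pi.single_eq_same]

theorem x_pow_smul_mem_range_xSum (e : V →ₗ[k] M) {s : ℕ} {β : k} (hs : s ≠ 0)
    (hxs : ∀ m : M, HO.x ^ s • m = β • m) (n : ℕ) (v : V) :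
    HO.x ^ n • e v ∈ LinearMap.range (HO.xSum e s) := by
  refine ⟨Pi.single ⟨n % s, Nat.mod_lt n (Nat.pos_of_ne_zero hs)⟩ (β ^ (n / s) • v), ?_⟩
  rw [xSum_single, map_smul, ← HO.x_pow_mul_smul hxs, ← mul_smul, ← pow_add, Nat.mod_add_div]

theorem xSum_injective {e : V →ₗ[k] M} (he : Function.Injective e) {s : ℕ} {a : G} {μ : k}
    (hq : IsPrimitiveRoot (χ a : k) s) (hμ : μ ≠ 0) (hx : Function.Injective (HO.x • · : M → M))
    (ha : ∀ v, HO.emb (MonoidAlgebra.of k G a) • e v = μ • e v) :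
    Function.Injective (HO.xSum e s) := by
  set A := Algebra.lsmul k k M (HO.emb (MonoidAlgebra.of k G a))
  have hind := (Module.End.eigenspaces_iSupIndep A).comp
    (f := fun j : Fin s => (χ a : k) ^ (j : ℕ) * μ)
    fun i j hij => Fin.ext (hq.pow_inj i.2 j.2 (mul_right_cancel₀ hμ hij))
  rw [← LinearMap.ker_eq_bot, eq_bot_iff]
  intro f hf
  rw [LinearMap.mem_ker, xSum_apply] at hf
  have hzero := (iSupIndep_iff_finsetSum_eq_zero_imp_eq_zero _).mp hind Finset.univ _
    (fun j _ => Module.End.mem_eigenspace_iff.mpr <| by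
      rw [Algebra.lsmul_apply, ← mul_smul, HO.emb_of_mul_x_pow, smul_assoc, mul_smul, ha,
        smul_comm _ μ, smul_smul]) hf
  funext j
  have hxj : Function.Injective (HO.x ^ (j : ℕ) • · : M → M) :=
    smul_iterate (α := M) HO.x j ▸ hx.iterate j
  refine he (hxj ?_)
  change HO.x ^ (j : ℕ) • e (f j) = HO.x ^ (j : ℕ) • e ((0 : Fin s → V) j)
  rw [hzero j (Finset.mem_univ j), Pi.zero_apply, map_zero, smul_zero]

theorem xSum_surjective [IsSimpleModule H M] {ρ : Representation k G V} {e : V →ₗ[k] M}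
    (he : ∀ g v, e (ρ g v) = HO.emb (MonoidAlgebra.of k G g) • e v) (hV : ∃ v, e v ≠ 0)
    {s : ℕ} {β : k} (hs : s ≠ 0) (hxs : ∀ m : M, HO.x ^ s • m = β • m) :
    Function.Surjective (HO.xSum e s) := by
  set S := Set.range fun p : ℕ × V => HO.x ^ p.1 • e p.2
  have hS : ∀ n v, HO.x ^ n • e v ∈ Submodule.span k S := fun n v =>
    Submodule.subset_span ⟨(n, v), rfl⟩
  have hmaps : ∀ f : Module.End k M, (∀ n v, f (HO.x ^ n • e v) ∈ Submodule.span k S) →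
      Set.MapsTo f (Submodule.span k S : Set M) (Submodule.span k S) := fun f hf _ hm =>
    (Submodule.span_le (p := (Submodule.span k S).comap f)).mpr
      (by rintro _ ⟨⟨n, v⟩, rfl⟩; exact hf n v) hm
  have hNx : Set.MapsTo (HO.x • ·) (Submodule.span k S : Set M) (Submodule.span k S) :=
    hmaps (Algebra.lsmul k k M HO.x) fun n v => by
      change HO.x • HO.x ^ n • e v ∈ Submodule.span k S
      rw [← mul_smul, ← pow_succ']
      exact hS (n + 1) v
  have hNg : ∀ g, Set.MapsTo (HO.emb (MonoidAlgebra.of k G g) • ·) (Submodule.span k S : Set M)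
      (Submodule.span k S) := fun g =>
    hmaps (Algebra.lsmul k k M (HO.emb (MonoidAlgebra.of k G g))) fun n v => by
      change HO.emb (MonoidAlgebra.of k G g) • HO.x ^ n • e v ∈ Submodule.span k S
      rw [← mul_smul, HO.emb_of_mul_x_pow, smul_assoc, mul_smul, ← he]
      exact Submodule.smul_mem _ _ (hS n _)
  let N : Submodule H M :=
    { Submodule.span k S with smul_mem' := fun h _ hm => HO.mapsTo_smul hNx hNg h hm }
  have hN : N = ⊤ := (IsSimpleOrder.eq_bot_or_eq_top N).resolve_left fun h => by
    obtain ⟨v, hv⟩ := hV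
    have : e v ∈ N := show e v ∈ Submodule.span k S by simpa using hS 0 v
    exact hv (by simpa [h] using this)
  intro m
  have hm : m ∈ Submodule.span k S := show m ∈ N from hN ▸ Submodule.mem_top
  exact (Submodule.span_le (p := LinearMap.range (HO.xSum e s))).mpr
    (by rintro _ ⟨⟨n, v⟩, rfl⟩; exact HO.x_pow_smul_mem_range_xSum e hs hxs n v) hm

theorem nonempty_stdWitness [IsAlgClosed k] [FiniteDimensional k M] [IsSimpleModule H M] {a : G}
    (ha : a ∈ Subgroup.center G) {s : ℕ} (hs : s ≠ 0) (hq : IsPrimitiveRoot (χ a : k) s) {β : k}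
    (hβ : β ≠ 0) (hann : ∀ m : M, (HO.x ^ s - algebraMap k H β) • m = 0) :
    Nonempty (StdWitness HO M (HO.x ^ s - algebraMap k H β) s) := by
  have hxs := HO.x_pow_smul_eq_of_ann hann
  have : Nontrivial M := IsSimpleModule.nontrivial H M
  obtain ⟨V, hV⟩ := exists_isAtom_subrepresentation (resRep HO M)
  have hVsimple := isSimpleRep_toRepresentation_of_isAtom hV
  have := hVsimple.1
  obtain ⟨μ, hμ⟩ := hVsimple.exists_apply_eq_smul_of_mem_center ha
  obtain ⟨v, hv⟩ := exists_ne (0 : V.toSubmodule)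
  have hμ0 : μ ≠ 0 := by
    rintro rfl
    apply hv
    simpa [← Module.End.mul_apply, ← map_mul] using congrArg (V.toRepresentation a⁻¹) (hμ v)
  refine ⟨⟨V.toSubmodule, V.toRepresentation, inferInstance, hVsimple, V.toSubmodule.subtype,
    ⟨fun g v => rfl, hann, ?_⟩⟩⟩
  rw [show (fun f : Fin s → V.toSubmodule =>
      ∑ j : Fin s, HO.x ^ (j : ℕ) • V.toSubmodule.subtype (f j)) = HO.xSum V.toSubmodule.subtype s
    from funext fun f => (HO.xSum_apply _ _ f).symm]
  exact ⟨HO.xSum_injective V.toSubmodule.injective_subtype hq hμ0 (HO.x_smul_injective hs hβ hxs)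
      fun v => congrArg Subtype.val (hμ v),
    HO.xSum_surjective (ρ := V.toRepresentation) (fun g v => rfl)
      ⟨v, fun h => hv (Subtype.ext h)⟩ hs hxs⟩

end HopfOre

theorem stmt_10_general {k G H : Type} [Field k] [IsAlgClosed k] [Group G]
    [Ring H] [Algebra k H]
    {χ : G →* kˣ} (a : G) (ha : a ∈ Subgroup.center G)
    (hss : IsSemisimpleRing (MonoidAlgebra k G))
    (s : ℕ) (hs : 1 < s) (hqord : orderOf (χ a) = s)
    (HO : HopfOre k G H χ)
    (M : Type) [AddCommGroup M] [Module k M] [Module H M] [IsScalarTower k H M]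
    [FiniteDimensional k M] (hind : IsIndecomposableMod H M)
    (β : k) (hβ : β ≠ 0)
    (hann : ∀ m : M, (HO.x ^ s - algebraMap k H β) • m = 0) :
    IsSimpleModule H M ∧
      Nonempty (StdWitness HO M (HO.x ^ s - algebraMap k H β) s) := by
  have hs0 : s ≠ 0 := Nat.ne_zero_of_lt hs
  have hq : IsPrimitiveRoot (χ a : k) s :=
    IsPrimitiveRoot.coe_units_iff.mpr (hqord ▸ IsPrimitiveRoot.orderOf (χ a))
  have hsk : (s : k) ≠ 0 := by
    have : NeZero s := ⟨hs0⟩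
    exact hq.neZero'.out
  have := HO.complementedLattice_submodule hsk hβ (HO.x_pow_smul_eq_of_ann hann)
  have : IsSimpleModule H M := hind.isSimpleModule
  exact ⟨this, HO.nonempty_stdWitness ha hs0 hq hβ hann⟩

/-- **Lemma 4.7.** Assume `kG` is finite-dimensional and semisimple and `|q| = |χ| = s`.
If `M` is a finite-dimensional indecomposable `H`-module with `(x^s - β)M = 0` for some
`β ∈ k^×`, then `M` is simple and `M ≅ V(i,β)` for some simple `kG`-module `V_i`. -/
theorem stmt_10 {k G H : Type} [Field k] [IsAlgClosed k] [Group G] [Finite G]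
    [Ring H] [Algebra k H]
    {χ : G →* kˣ} (a : G) (ha : a ∈ Subgroup.center G) (hχa : χ a ≠ 1)
    (hss : IsSemisimpleRing (MonoidAlgebra k G))
    (s : ℕ) (hs : 1 < s) (hχord : orderOf χ = s) (hqord : orderOf (χ a) = s)
    (HO : HopfOre k G H χ)
    (M : Type) [AddCommGroup M] [Module k M] [Module H M] [IsScalarTower k H M]
    [FiniteDimensional k M] (hind : IsIndecomposableMod H M)
    (β : k) (hβ : β ≠ 0)
    (hann : ∀ m : M, (HO.x ^ s - algebraMap k H β) • m = 0) :
    IsSimpleModule H M ∧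
      Nonempty (StdWitness HO M (HO.x ^ s - algebraMap k H β) s) :=
  stmt_10_general a ha hss s hs hqord HO M hind β hβ hann

end HopfOrePaper
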